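/- arXiv:2504.21835 — 3 statements merged into one kernel-verified Lean document; each statement's English description precedes it below -/
import Mathlib

section
/- Let ε > 0, let a ∈ ℝ² be a constant vector, and let T = (0,h₁) × (0,h₂) ⊂ ℝ² with h₁, h₂ > 0. Suppose b : ℝ² → ℝ is twice continuously differentiable on an open set containing the closure of T, vanishes on ∂T, and satisfies −ε·Δb(x) + a·∇b(x) = 1 for all x ∈ T. Then ∫_T b(x) dx > 0. -/
open MeasureTheory Set

/-- First partial derivative (in direction `(1,0)`). -/
noncomputable def pd1 (v : ℝ × ℝ → ℝ) (x : ℝ × ℝ) : ℝ := fderiv ℝ v x (1, 0)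

/-- Second partial derivative (in direction `(0,1)`). -/
noncomputable def pd2 (v : ℝ × ℝ → ℝ) (x : ℝ × ℝ) : ℝ := fderiv ℝ v x (0, 1)

/-- Laplacian `Δv = ∂₁₁v + ∂₂₂v`. -/
noncomputable def lap (v : ℝ × ℝ → ℝ) (x : ℝ × ℝ) : ℝ := pd1 (pd1 v) x + pd2 (pd2 v) x

/-- Directional (advective) derivative `a·∇v` for a constant vector `a`. -/
noncomputable def adv (a : ℝ × ℝ) (v : ℝ × ℝ → ℝ) (x : ℝ × ℝ) : ℝ :=
  a.1 * pd1 v x + a.2 * pd2 v x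

theorem rfb_integral_positive
    (ε : ℝ) (hε : 0 < ε) (a : ℝ × ℝ) (h₁ h₂ : ℝ) (hh₁ : 0 < h₁) (hh₂ : 0 < h₂)
    (T : Set (ℝ × ℝ)) (hT : T = Ioo (0 : ℝ) h₁ ×ˢ Ioo (0 : ℝ) h₂)
    (b : ℝ × ℝ → ℝ) (U : Set (ℝ × ℝ)) (hU : IsOpen U) (hTU : closure T ⊆ U)
    (hb : ContDiffOn ℝ 2 b U)
    (hb0 : ∀ x ∈ frontier T, b x = 0)
    (hpde : ∀ x ∈ T, -ε * lap b x + adv a b x = 1) :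
    0 < ∫ x in T, b x := by
  have hTopen : IsOpen T := by rw [hT]; exact isOpen_Ioo.prod isOpen_Ioo
  have hclos : closure T = Icc (0:ℝ) h₁ ×ˢ Icc (0:ℝ) h₂ := by
    rw [hT, closure_prod_eq, closure_Ioo hh₁.ne, closure_Ioo hh₂.ne]
  have hIcc : Icc ((0:ℝ),(0:ℝ)) (h₁,h₂) = closure T := by rw [hclos, Icc_prod_eq]
  have hsubU : ∀ x ∈ T, x ∈ U := fun x hx => hTU (subset_closure hx)
  -- differentiability facts
  have hb1 : ContDiffOn ℝ 1 b U := hb.of_le one_le_two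
  have hbD : ∀ x ∈ U, HasFDerivAt b (fderiv ℝ b x) x := fun x hx =>
    ((hb1.differentiableOn one_ne_zero).differentiableAt (hU.mem_nhds hx)).hasFDerivAt
  have hfd : ContDiffOn ℝ 1 (fun x => fderiv ℝ b x) U :=
    hb.fderiv_of_isOpen (m := 1) hU (by norm_num)
  have hg1 : ContDiffOn ℝ 1 (pd1 b) U := hfd.clm_apply contDiffOn_const
  have hg2 : ContDiffOn ℝ 1 (pd2 b) U := hfd.clm_apply contDiffOn_const
  have hg1D : ∀ x ∈ U, HasFDerivAt (pd1 b) (fderiv ℝ (pd1 b) x) x := fun x hx =>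
    ((hg1.differentiableOn one_ne_zero).differentiableAt (hU.mem_nhds hx)).hasFDerivAt
  have hg2D : ∀ x ∈ U, HasFDerivAt (pd2 b) (fderiv ℝ (pd2 b) x) x := fun x hx =>
    ((hg2.differentiableOn one_ne_zero).differentiableAt (hU.mem_nhds hx)).hasFDerivAt
  have hbc : ContinuousOn b U := hb.continuousOn
  have hg1c : ContinuousOn (pd1 b) U := hg1.continuousOn
  have hg2c : ContinuousOn (pd2 b) U := hg2.continuousOn
  have hg1fc : ContinuousOn (fun x => fderiv ℝ (pd1 b) x) U :=
    (hg1.fderiv_of_isOpen (m := 0) hU (by norm_num)).continuousOn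
  have hg2fc : ContinuousOn (fun x => fderiv ℝ (pd2 b) x) U :=
    (hg2.fderiv_of_isOpen (m := 0) hU (by norm_num)).continuousOn
  have hDbc : ContinuousOn (fun x => fderiv ℝ b x) U := hfd.continuousOn
  -- the flux fields and their derivatives
  set F₁ : ℝ × ℝ → ℝ := fun x => -ε * (b x * pd1 b x) + a.1/2 * (b x * b x) with hF₁def
  set F₂ : ℝ × ℝ → ℝ := fun x => -ε * (b x * pd2 b x) + a.2/2 * (b x * b x) with hF₂def
  set L₁ : ℝ × ℝ → (ℝ × ℝ →L[ℝ] ℝ) := fun x =>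
    (-ε) • (b x • fderiv ℝ (pd1 b) x + pd1 b x • fderiv ℝ b x) +
      (a.1/2) • (b x • fderiv ℝ b x + b x • fderiv ℝ b x) with hL₁def
  set L₂ : ℝ × ℝ → (ℝ × ℝ →L[ℝ] ℝ) := fun x =>
    (-ε) • (b x • fderiv ℝ (pd2 b) x + pd2 b x • fderiv ℝ b x) +
      (a.2/2) • (b x • fderiv ℝ b x + b x • fderiv ℝ b x) with hL₂def
  have hF₁D : ∀ x ∈ U, HasFDerivAt F₁ (L₁ x) x := fun x hx =>
    (((hbD x hx).mul (hg1D x hx)).const_mul (-ε)).add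
      (((hbD x hx).mul (hbD x hx)).const_mul (a.1/2))
  have hF₂D : ∀ x ∈ U, HasFDerivAt F₂ (L₂ x) x := fun x hx =>
    (((hbD x hx).mul (hg2D x hx)).const_mul (-ε)).add
      (((hbD x hx).mul (hbD x hx)).const_mul (a.2/2))
  have hF₁c : ContinuousOn F₁ U :=
    (continuousOn_const.mul (hbc.mul hg1c)).add (continuousOn_const.mul (hbc.mul hbc))
  have hF₂c : ContinuousOn F₂ U :=
    (continuousOn_const.mul (hbc.mul hg2c)).add (continuousOn_const.mul (hbc.mul hbc))
  have hL₁c : ContinuousOn L₁ U :=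
    ((continuousOn_const (c := -ε)).smul ((hbc.smul hg1fc).add (hg1c.smul hDbc))).add
      ((continuousOn_const (c := a.1/2)).smul ((hbc.smul hDbc).add (hbc.smul hDbc)))
  have hL₂c : ContinuousOn L₂ U :=
    ((continuousOn_const (c := -ε)).smul ((hbc.smul hg2fc).add (hg2c.smul hDbc))).add
      ((continuousOn_const (c := a.2/2)).smul ((hbc.smul hDbc).add (hbc.smul hDbc)))
  have hdivc : ContinuousOn (fun x => L₁ x (1, 0) + L₂ x (0, 1)) U := by
    exact ((ContinuousLinearMap.apply ℝ ℝ ((1:ℝ),(0:ℝ))).continuous.comp_continuousOn hL₁c).add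
      ((ContinuousLinearMap.apply ℝ ℝ ((0:ℝ),(1:ℝ))).continuous.comp_continuousOn hL₂c)
  -- boundary vanishing
  have hbd0 : ∀ x ∈ closure T, x ∉ T → b x = 0 := fun x hx hx' =>
    hb0 x ⟨hx, by rwa [hTopen.interior_eq]⟩
  -- the divergence theorem
  have hccT : Icc ((0:ℝ),(0:ℝ)) (h₁,h₂) ⊆ U := hIcc ▸ hTU
  have hmemT : ∀ x ∈ Ioo ((0:ℝ),(0:ℝ)).1 (h₁,h₂).1 ×ˢ Ioo ((0:ℝ),(0:ℝ)).2 (h₁,h₂).2 \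
      (∅ : Set (ℝ × ℝ)), x ∈ T := fun x hx => by rw [hT]; exact hx.1
  have key := integral_divergence_prod_Icc_of_hasFDerivAt_off_countable_of_le
    F₁ F₂ L₁ L₂ ((0:ℝ),(0:ℝ)) (h₁,h₂) ⟨hh₁.le, hh₂.le⟩ ∅ countable_empty
    (hF₁c.mono hccT) (hF₂c.mono hccT)
    (fun x hx => hF₁D x (hsubU x (hmemT x hx)))
    (fun x hx => hF₂D x (hsubU x (hmemT x hx)))
    (((hdivc.mono hccT)).integrableOn_compact isCompact_Icc)
  -- boundary terms vanish
  have hbzero_top : ∀ t ∈ uIcc (0:ℝ) h₁, b (t, h₂) = 0 := by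
    intro t ht
    rw [uIcc_of_le hh₁.le] at ht
    refine hbd0 _ (by rw [hclos]; exact ⟨ht, right_mem_Icc.2 hh₂.le⟩) ?_
    rw [hT]; rintro ⟨-, h⟩; exact absurd h.2 (lt_irrefl h₂)
  have hbzero_bot : ∀ t ∈ uIcc (0:ℝ) h₁, b (t, 0) = 0 := by
    intro t ht
    rw [uIcc_of_le hh₁.le] at ht
    refine hbd0 _ (by rw [hclos]; exact ⟨ht, left_mem_Icc.2 hh₂.le⟩) ?_
    rw [hT]; rintro ⟨-, h⟩; exact absurd h.1 (lt_irrefl 0)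
  have hbzero_right : ∀ t ∈ uIcc (0:ℝ) h₂, b (h₁, t) = 0 := by
    intro t ht
    rw [uIcc_of_le hh₂.le] at ht
    refine hbd0 _ (by rw [hclos]; exact ⟨right_mem_Icc.2 hh₁.le, ht⟩) ?_
    rw [hT]; rintro ⟨h, -⟩; exact absurd h.2 (lt_irrefl h₁)
  have hbzero_left : ∀ t ∈ uIcc (0:ℝ) h₂, b (0, t) = 0 := by
    intro t ht
    rw [uIcc_of_le hh₂.le] at ht
    refine hbd0 _ (by rw [hclos]; exact ⟨left_mem_Icc.2 hh₁.le, ht⟩) ?_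
    rw [hT]; rintro ⟨h, -⟩; exact absurd h.1 (lt_irrefl 0)
  have e1 : (∫ t in (0:ℝ)..h₁, F₂ (t, h₂)) = 0 := by
    rw [intervalIntegral.integral_congr (g := fun _ => (0:ℝ))
      (fun t ht => by simp [hF₂def, hbzero_top t ht])]
    simp
  have e2 : (∫ t in (0:ℝ)..h₁, F₂ (t, 0)) = 0 := by
    rw [intervalIntegral.integral_congr (g := fun _ => (0:ℝ))
      (fun t ht => by simp [hF₂def, hbzero_bot t ht])]
    simp
  have e3 : (∫ t in (0:ℝ)..h₂, F₁ (h₁, t)) = 0 := by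
    rw [intervalIntegral.integral_congr (g := fun _ => (0:ℝ))
      (fun t ht => by simp [hF₁def, hbzero_right t ht])]
    simp
  have e4 : (∫ t in (0:ℝ)..h₂, F₁ (0, t)) = 0 := by
    rw [intervalIntegral.integral_congr (g := fun _ => (0:ℝ))
      (fun t ht => by simp [hF₁def, hbzero_left t ht])]
    simp
  rw [e1, e2, e3, e4] at key
  norm_num at key
  -- key : ∫ x in Icc (0,0) (h₁,h₂), L₁ x (1,0) + L₂ x (0,1) = 0
  -- transfer the integral to T
  have hfr0 : volume (frontier T) = 0 := by
    rw [hT]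
    exact ((convex_Ioo (0:ℝ) h₁).prod (convex_Ioo (0:ℝ) h₂)).addHaar_frontier volume
  have haeeq : (Icc ((0:ℝ),(0:ℝ)) (h₁,h₂) : Set (ℝ × ℝ)) =ᵐ[volume] T := by
    rw [hIcc]
    rw [Filter.eventuallyEq_set]
    have : ∀ᵐ x : ℝ × ℝ ∂volume, x ∉ frontier T := by
      rw [MeasureTheory.ae_iff]; simpa using hfr0
    filter_upwards [this] with x hx
    constructor
    · intro hc
      by_contra hnT
      exact hx ⟨hc, by rwa [hTopen.interior_eq]⟩
    · exact fun h => subset_closure h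
  have keyform : (∫ x in Icc ((0:ℝ),(0:ℝ)) (h₁,h₂), (L₁ x (1,0) + L₂ x (0,1))) = 0 := by
    exact_mod_cast key
  rw [setIntegral_congr_set haeeq] at keyform
  -- pointwise divergence identity on T
  set G : ℝ × ℝ → ℝ := fun x => pd1 b x * pd1 b x + pd2 b x * pd2 b x with hGdef
  have hdiv : ∀ x ∈ T, L₁ x (1, 0) + L₂ x (0, 1) = b x - ε * G x := by
    intro x hx
    have h := hpde x hx
    unfold lap adv at h
    have r1 : (fderiv ℝ b x) ((1:ℝ), (0:ℝ)) = pd1 b x := rfl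
    have r2 : (fderiv ℝ b x) ((0:ℝ), (1:ℝ)) = pd2 b x := rfl
    have r3 : (fderiv ℝ (pd1 b) x) ((1:ℝ), (0:ℝ)) = pd1 (pd1 b) x := rfl
    have r4 : (fderiv ℝ (pd2 b) x) ((0:ℝ), (1:ℝ)) = pd2 (pd2 b) x := rfl
    simp only [hL₁def, hL₂def, hGdef, ContinuousLinearMap.add_apply,
      ContinuousLinearMap.smul_apply, smul_eq_mul, r1, r2, r3, r4]
    linear_combination (b x) * h
  rw [setIntegral_congr_fun hTopen.measurableSet hdiv] at keyform
  -- integrability of b and G on T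
  have hclosC : IsCompact (closure T) := by
    rw [hclos]; exact (isCompact_Icc.prod isCompact_Icc)
  have hbi : IntegrableOn b T :=
    ((hbc.mono hTU).integrableOn_compact hclosC).mono_set subset_closure
  have hGc : ContinuousOn G U := (hg1c.mul hg1c).add (hg2c.mul hg2c)
  have hGi : IntegrableOn G T :=
    ((hGc.mono hTU).integrableOn_compact hclosC).mono_set subset_closure
  have hsplit : (∫ x in T, b x) = ε * ∫ x in T, G x := by
    have := integral_sub hbi (hGi.const_mul ε)
    rw [keyform] at this
    have h2 : (∫ x in T, ε * G x) = ε * ∫ x in T, G x := by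
      rw [MeasureTheory.integral_const_mul]
    linarith [this, h2]
  by_cases hzero : ∀ x ∈ T, pd1 b x = 0 ∧ pd2 b x = 0
  · -- derivatives vanish identically: contradiction with the PDE
    exfalso
    have hx0 : ((h₁/2, h₂/2) : ℝ × ℝ) ∈ T := by
      rw [hT]
      exact ⟨⟨by linarith, by linarith⟩, ⟨by linarith, by linarith⟩⟩
    have hnhds := hTopen.mem_nhds hx0
    have h1 : pd1 b =ᶠ[nhds ((h₁/2, h₂/2) : ℝ × ℝ)] fun _ => (0:ℝ) := by
      filter_upwards [hnhds] with y hy using (hzero y hy).1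
    have h2 : pd2 b =ᶠ[nhds ((h₁/2, h₂/2) : ℝ × ℝ)] fun _ => (0:ℝ) := by
      filter_upwards [hnhds] with y hy using (hzero y hy).2
    have e1' : fderiv ℝ (pd1 b) ((h₁/2, h₂/2) : ℝ × ℝ) = 0 := by
      rw [h1.fderiv_eq, fderiv_fun_const]; rfl
    have e2' : fderiv ℝ (pd2 b) ((h₁/2, h₂/2) : ℝ × ℝ) = 0 := by
      rw [h2.fderiv_eq, fderiv_fun_const]; rfl
    have hp := hpde _ hx0
    obtain ⟨z1, z2⟩ := hzero _ hx0
    have z3 : pd1 (pd1 b) ((h₁/2, h₂/2) : ℝ × ℝ) = 0 := by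
      show (fderiv ℝ (pd1 b) ((h₁/2, h₂/2) : ℝ × ℝ)) (1, 0) = 0
      rw [e1']; rfl
    have z4 : pd2 (pd2 b) ((h₁/2, h₂/2) : ℝ × ℝ) = 0 := by
      show (fderiv ℝ (pd2 b) ((h₁/2, h₂/2) : ℝ × ℝ)) (0, 1) = 0
      rw [e2']; rfl
    unfold lap adv at hp
    rw [z1, z2, z3, z4] at hp
    simp at hp
  · -- the gradient is somewhere nonzero: the energy is positive
    push_neg at hzero
    obtain ⟨x₀, hx₀T, hx₀⟩ := hzero
    have hne : pd1 b x₀ ≠ 0 ∨ pd2 b x₀ ≠ 0 := by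
      by_cases h : pd1 b x₀ = 0
      · exact Or.inr (hx₀ h)
      · exact Or.inl h
    have hGx₀ : 0 < G x₀ := by
      have n1 : 0 ≤ pd1 b x₀ * pd1 b x₀ := mul_self_nonneg _
      have n2 : 0 ≤ pd2 b x₀ * pd2 b x₀ := mul_self_nonneg _
      rcases hne with h | h
      · have := mul_self_pos.2 h
        simp only [hGdef]; linarith
      · have := mul_self_pos.2 h
        simp only [hGdef]; linarith
    have hGnn : 0 ≤ᵐ[volume.restrict T] G := by
      refine Filter.Eventually.of_forall fun y => ?_
      have n1 : 0 ≤ pd1 b y * pd1 b y := mul_self_nonneg _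
      have n2 : 0 ≤ pd2 b y * pd2 b y := mul_self_nonneg _
      simp only [hGdef, Pi.zero_apply]; linarith
    have hGpos : 0 < ∫ x in T, G x := by
      rw [setIntegral_pos_iff_support_of_nonneg_ae hGnn hGi]
      have hWopen : IsOpen (U ∩ G ⁻¹' Ioi 0 ∩ T) :=
        (hGc.isOpen_inter_preimage hU isOpen_Ioi).inter hTopen
      have hWsub : U ∩ G ⁻¹' Ioi 0 ∩ T ⊆ Function.support G ∩ T := by
        rintro y ⟨⟨-, hy2⟩, hy3⟩
        exact ⟨ne_of_gt hy2, hy3⟩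
      have := hWopen.measure_pos volume ⟨x₀, ⟨⟨hsubU x₀ hx₀T, hGx₀⟩, hx₀T⟩⟩
      exact lt_of_lt_of_le this (measure_mono hWsub)
    rw [hsplit]
    exact mul_pos hε hGpos
end

section
/- Let a > 0, h > 0 and for each ε > 0 define b_ε : ℝ → ℝ by b_ε(x) = x/a − (h/a)·(e^{a x/ε} − 1)/(e^{a h/ε} − 1). Then: (i) for every ε > 0, b_ε satisfies −ε·b_ε''(x) + a·b_ε'(x) = 1 for all x ∈ (0,h) and b_ε(0) = b_ε(h) = 0; and (ii) the averaged integral (1/h)·∫₀^h b_ε(x) dx tends to h/(2a) as ε → 0⁺. -/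
open MeasureTheory Set

private lemma first_deriv (a h ε : ℝ) (hε : 0 < ε) (b : ℝ → ℝ → ℝ)
    (hb : ∀ ε x : ℝ, b ε x =
      x / a - (h / a) * (Real.exp (a * x / ε) - 1) / (Real.exp (a * h / ε) - 1)) (x : ℝ) :
    HasDerivAt (b ε)
      (1 / a - (h / a) * (Real.exp (a * x / ε) * (a / ε)) / (Real.exp (a * h / ε) - 1)) x := by
  have hfun : b ε = fun x => x / a - (h / a) * (Real.exp (a * x / ε) - 1) /
      (Real.exp (a * h / ε) - 1) := funext (hb ε)
  rw [hfun]
  have h1 : HasDerivAt (fun x : ℝ => a * x / ε) (a / ε) x := by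
    simpa using ((hasDerivAt_id x).const_mul a).div_const ε
  have h2 : HasDerivAt (fun x : ℝ => Real.exp (a * x / ε)) (Real.exp (a * x / ε) * (a / ε)) x :=
    h1.exp
  have h3 := (((h2.sub_const 1).const_mul (h / a)).div_const (Real.exp (a * h / ε) - 1))
  have h4 := ((hasDerivAt_id x).div_const a).sub h3
  exact h4

theorem one_dimensional_rfb_and_supg_limit
    (a h : ℝ) (ha : 0 < a) (hh : 0 < h)
    (b : ℝ → ℝ → ℝ)
    (hb : ∀ ε x : ℝ, b ε x =
      x / a - (h / a) * (Real.exp (a * x / ε) - 1) / (Real.exp (a * h / ε) - 1)) :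
    (∀ ε > (0 : ℝ),
      (∀ x ∈ Ioo (0 : ℝ) h, -ε * deriv (deriv (b ε)) x + a * deriv (b ε) x = 1) ∧
      b ε 0 = 0 ∧ b ε h = 0) ∧
    Filter.Tendsto (fun ε : ℝ => (1 / h) * ∫ x in (0 : ℝ)..h, b ε x)
      (nhdsWithin 0 (Ioi 0)) (nhds (h / (2 * a))) := by
  have hD : ∀ ε : ℝ, 0 < ε → Real.exp (a * h / ε) - 1 ≠ 0 := by
    intro ε hε
    have : 1 < Real.exp (a * h / ε) := Real.one_lt_exp_iff.mpr (by positivity)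
    linarith
  constructor
  · intro ε hε
    have hDε := hD ε hε
    refine ⟨?_, ?_, ?_⟩
    · intro x hx
      have hd1 : deriv (b ε) = fun x =>
          1 / a - (h / a) * (Real.exp (a * x / ε) * (a / ε)) / (Real.exp (a * h / ε) - 1) := by
        funext y
        exact (first_deriv a h ε hε b hb y).deriv
      have hd2 : HasDerivAt (deriv (b ε))
          (-((h / a) * (Real.exp (a * x / ε) * (a / ε) * (a / ε)) /
            (Real.exp (a * h / ε) - 1))) x := by
        rw [hd1]
        have h1 : HasDerivAt (fun x : ℝ => a * x / ε) (a / ε) x := by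
          simpa using ((hasDerivAt_id x).const_mul a).div_const ε
        have h2 : HasDerivAt (fun x : ℝ => Real.exp (a * x / ε))
            (Real.exp (a * x / ε) * (a / ε)) x := h1.exp
        have h3 := (((h2.mul_const (a / ε)).const_mul (h / a)).div_const
          (Real.exp (a * h / ε) - 1))
        have h4 := (hasDerivAt_const x (1 / a)).sub h3
        refine h4.congr_deriv ?_
        ring
      rw [hd2.deriv, (first_deriv a h ε hε b hb x).deriv]
      have hε' : ε ≠ 0 := ne_of_gt hε
      have ha' : a ≠ 0 := ne_of_gt ha
      field_simp
      ring
    · rw [hb]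
      simp
    · rw [hb]
      rw [mul_div_assoc, div_self hDε]
      ring
  · -- the limit
    have key : ∀ ε : ℝ, 0 < ε →
        (1 / h) * ∫ x in (0 : ℝ)..h, b ε x
          = h / (2 * a) - ε / a ^ 2 + h / (a * (Real.exp (a * h / ε) - 1)) := by
      intro ε hε
      have hDε := hD ε hε
      have hint : ∫ x in (0 : ℝ)..h, b ε x
          = h ^ 2 / (2 * a) - (h / a) * ((ε / a) * (Real.exp (a * h / ε) - 1) - h) /
              (Real.exp (a * h / ε) - 1) := by
        have hF : ∀ x ∈ Set.uIcc (0 : ℝ) h, HasDerivAt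
            (fun x => x ^ 2 / (2 * a) - (h / a) * ((ε / a) * Real.exp (a * x / ε) - x) /
              (Real.exp (a * h / ε) - 1)) (b ε x) x := by
          intro x _
          have h1 : HasDerivAt (fun x : ℝ => a * x / ε) (a / ε) x := by
            simpa using ((hasDerivAt_id x).const_mul a).div_const ε
          have h2 : HasDerivAt (fun x : ℝ => Real.exp (a * x / ε))
              (Real.exp (a * x / ε) * (a / ε)) x := h1.exp
          have h3 : HasDerivAt (fun x : ℝ => x ^ 2) (2 * x) x := by
            simpa using hasDerivAt_pow 2 x
          have h4 := (h3.div_const (2 * a)).sub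
            ((((h2.const_mul (ε / a)).sub (hasDerivAt_id x)).const_mul (h / a)).div_const
              (Real.exp (a * h / ε) - 1))
          rw [hb]
          refine h4.congr_deriv ?_
          have hε' : ε ≠ 0 := ne_of_gt hε
          have ha' : a ≠ 0 := ne_of_gt ha
          field_simp
        have hcont : IntervalIntegrable (b ε) volume 0 h := by
          have : Continuous (b ε) := by
            have : b ε = fun x => x / a - (h / a) * (Real.exp (a * x / ε) - 1) /
                (Real.exp (a * h / ε) - 1) := funext (hb ε)
            rw [this]; fun_prop
          exact this.intervalIntegrable 0 h
        have := intervalIntegral.integral_eq_sub_of_hasDerivAt hF hcont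
        rw [this]
        simp only [mul_zero, zero_div, Real.exp_zero]
        field_simp
        ring
      rw [hint]
      have hε' : ε ≠ 0 := ne_of_gt hε
      have ha' : a ≠ 0 := ne_of_gt ha
      have hh' : h ≠ 0 := ne_of_gt hh
      generalize Real.exp (a * h / ε) - 1 = E at hDε ⊢
      field_simp
      ring
    have heq : ∀ᶠ ε in nhdsWithin (0:ℝ) (Ioi 0),
        h / (2 * a) - ε / a ^ 2 + h / (a * (Real.exp (a * h / ε) - 1))
          = (1 / h) * ∫ x in (0 : ℝ)..h, b ε x := by
      filter_upwards [self_mem_nhdsWithin] with ε hε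
      exact (key ε hε).symm
    have hlim : Filter.Tendsto
        (fun ε : ℝ => h / (2 * a) - ε / a ^ 2 + h / (a * (Real.exp (a * h / ε) - 1)))
        (nhdsWithin 0 (Ioi 0)) (nhds (h / (2 * a))) := by
      have h0 : Filter.Tendsto (fun ε : ℝ => a * h / ε) (nhdsWithin 0 (Ioi 0)) Filter.atTop := by
        have := Filter.Tendsto.const_mul_atTop (by positivity : (0:ℝ) < a * h)
          tendsto_inv_nhdsGT_zero
        simpa [div_eq_mul_inv] using this
      have h1 : Filter.Tendsto (fun ε : ℝ => a * (Real.exp (a * h / ε) - 1))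
          (nhdsWithin 0 (Ioi 0)) Filter.atTop := by
        apply Filter.Tendsto.const_mul_atTop ha
        apply Filter.tendsto_atTop_add_const_right _ (-1 : ℝ)
        exact Real.tendsto_exp_atTop.comp h0
      have h2 : Filter.Tendsto (fun ε : ℝ => h / (a * (Real.exp (a * h / ε) - 1)))
          (nhdsWithin 0 (Ioi 0)) (nhds 0) := by
        simpa [div_eq_mul_inv] using
          (h1.inv_tendsto_atTop).const_mul h
      have h3 : Filter.Tendsto (fun ε : ℝ => h / (2 * a) - ε / a ^ 2)
          (nhdsWithin 0 (Ioi 0)) (nhds (h / (2 * a))) := by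
        have : Filter.Tendsto (fun ε : ℝ => h / (2 * a) - ε / a ^ 2) (nhds 0)
            (nhds (h / (2 * a) - 0 / a ^ 2)) := by
          apply Filter.Tendsto.sub tendsto_const_nhds
          exact (continuous_id.div_const _).tendsto 0
        simpa using this.mono_left nhdsWithin_le_nhds
      simpa using h3.add h2
    exact Filter.Tendsto.congr' heq hlim
end

section
/- Let ε > 0, let a ∈ ℝ² be a constant vector, and let T = (0,h₁) × (0,h₂) ⊂ ℝ² with h₁, h₂ > 0. Suppose b : ℝ² → ℝ is twice continuously differentiable on an open set containing the closure of T, vanishes on ∂T, and satisfies −ε·Δb(x) + a·∇b(x) = 1 for all x ∈ T. Then for every affine function φ(x) = c₀ + g·x (c₀ ∈ ℝ, g ∈ ℝ²), the full bilinear form satisfies ∫_T ( ε·∇b(x)·∇φ(x) + (a·∇b(x))·φ(x) ) dx = −(a·g)·∫_T b(x) dx; in particular the value of the bilinear form applied to the bubble and any piecewise affine finite element basis function is determined by the single scalar ∫_T b. -/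
open MeasureTheory Set

lemma contOn_pd1 (f : ℝ × ℝ → ℝ) (U : Set (ℝ × ℝ)) (hU : IsOpen U)
    (hf : ContDiffOn ℝ 1 f U) : ContinuousOn (pd1 f) U := by
  have h := hf.continuousOn_fderiv_of_isOpen hU le_rfl
  exact (ContinuousLinearMap.apply ℝ ℝ ((1:ℝ), (0:ℝ))).continuous.comp_continuousOn h

lemma contOn_pd2 (f : ℝ × ℝ → ℝ) (U : Set (ℝ × ℝ)) (hU : IsOpen U)
    (hf : ContDiffOn ℝ 1 f U) : ContinuousOn (pd2 f) U := by
  have h := hf.continuousOn_fderiv_of_isOpen hU le_rfl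
  exact (ContinuousLinearMap.apply ℝ ℝ ((0:ℝ), (1:ℝ))).continuous.comp_continuousOn h

lemma key1 (h₁ h₂ : ℝ) (hh₁ : 0 < h₁) (hh₂ : 0 < h₂)
    (f : ℝ × ℝ → ℝ) (U : Set (ℝ × ℝ)) (hU : IsOpen U)
    (hTU : Icc 0 h₁ ×ˢ Icc 0 h₂ ⊆ U)
    (hf : ContDiffOn ℝ 1 f U)
    (hf0 : ∀ y ∈ Icc (0:ℝ) h₂, f (0, y) = 0 ∧ f (h₁, y) = 0) :
    ∫ x in Ioo (0:ℝ) h₁ ×ˢ Ioo (0:ℝ) h₂, pd1 f x = 0 := by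
  have hC : ContinuousOn (pd1 f) U := contOn_pd1 f U hU hf
  have hsub : Ioo (0:ℝ) h₁ ×ˢ Ioo (0:ℝ) h₂ ⊆ Icc 0 h₁ ×ˢ Icc 0 h₂ :=
    prod_mono Ioo_subset_Icc_self Ioo_subset_Icc_self
  have hint : IntegrableOn (pd1 f) (Ioo (0:ℝ) h₁ ×ˢ Ioo (0:ℝ) h₂) :=
    ((hC.mono hTU).integrableOn_compact (isCompact_Icc.prod isCompact_Icc)).mono_set hsub
  rw [Measure.volume_eq_prod] at hint ⊢
  rw [setIntegral_prod _ hint]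
  rw [MeasureTheory.integral_integral_swap (by rwa [Measure.prod_restrict] : Integrable (Function.uncurry fun x y => pd1 f (x, y)) ((volume.restrict (Ioo (0:ℝ) h₁)).prod (volume.restrict (Ioo (0:ℝ) h₂))))]
  have inner : ∀ y ∈ Ioo (0:ℝ) h₂, ∫ x in Ioo (0:ℝ) h₁, pd1 f (x, y) = 0 := by
    intro y hy
    have hyI : y ∈ Icc (0:ℝ) h₂ := Ioo_subset_Icc_self hy
    have hderiv : ∀ x ∈ uIcc (0:ℝ) h₁, HasDerivAt (fun t => f (t, y)) (pd1 f (x, y)) x := by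
      intro x hx
      rw [uIcc_of_le hh₁.le] at hx
      have hp : ((x : ℝ), y) ∈ U := hTU ⟨hx, hyI⟩
      have hdf : HasFDerivAt f (fderiv ℝ f (x, y)) (x, y) :=
        ((hf.contDiffAt (hU.mem_nhds hp)).differentiableAt one_ne_zero).hasFDerivAt
      have hline : HasDerivAt (fun t : ℝ => ((t, y) : ℝ × ℝ)) ((1:ℝ), (0:ℝ)) x :=
        HasDerivAt.prodMk (hasDerivAt_id x) (hasDerivAt_const x y)
      exact hdf.comp_hasDerivAt x hline
    have hii : IntervalIntegrable (fun x => pd1 f (x, y)) volume 0 h₁ := by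
      apply ContinuousOn.intervalIntegrable
      rw [uIcc_of_le hh₁.le]
      exact (hC.mono hTU).comp (Continuous.continuousOn (by continuity))
        (fun x hx => ⟨hx, hyI⟩)
    rw [← integral_Ioc_eq_integral_Ioo, ← intervalIntegral.integral_of_le hh₁.le,
      intervalIntegral.integral_eq_sub_of_hasDerivAt hderiv hii,
      (hf0 y hyI).1, (hf0 y hyI).2, sub_zero]
  calc ∫ y in Ioo (0:ℝ) h₂, ∫ x in Ioo (0:ℝ) h₁, pd1 f (x, y)
      = ∫ y in Ioo (0:ℝ) h₂, (0:ℝ) := setIntegral_congr_fun measurableSet_Ioo inner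
    _ = 0 := integral_zero _ _

lemma key2 (h₁ h₂ : ℝ) (hh₁ : 0 < h₁) (hh₂ : 0 < h₂)
    (f : ℝ × ℝ → ℝ) (U : Set (ℝ × ℝ)) (hU : IsOpen U)
    (hTU : Icc 0 h₁ ×ˢ Icc 0 h₂ ⊆ U)
    (hf : ContDiffOn ℝ 1 f U)
    (hf0 : ∀ x ∈ Icc (0:ℝ) h₁, f (x, 0) = 0 ∧ f (x, h₂) = 0) :
    ∫ x in Ioo (0:ℝ) h₁ ×ˢ Ioo (0:ℝ) h₂, pd2 f x = 0 := by
  have hC : ContinuousOn (pd2 f) U := contOn_pd2 f U hU hf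
  have hsub : Ioo (0:ℝ) h₁ ×ˢ Ioo (0:ℝ) h₂ ⊆ Icc 0 h₁ ×ˢ Icc 0 h₂ :=
    prod_mono Ioo_subset_Icc_self Ioo_subset_Icc_self
  have hint : IntegrableOn (pd2 f) (Ioo (0:ℝ) h₁ ×ˢ Ioo (0:ℝ) h₂) :=
    ((hC.mono hTU).integrableOn_compact (isCompact_Icc.prod isCompact_Icc)).mono_set hsub
  rw [Measure.volume_eq_prod] at hint ⊢
  rw [setIntegral_prod _ hint]
  have inner : ∀ x ∈ Ioo (0:ℝ) h₁, ∫ y in Ioo (0:ℝ) h₂, pd2 f (x, y) = 0 := by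
    intro x hx
    have hxI : x ∈ Icc (0:ℝ) h₁ := Ioo_subset_Icc_self hx
    have hderiv : ∀ y ∈ uIcc (0:ℝ) h₂, HasDerivAt (fun t => f (x, t)) (pd2 f (x, y)) y := by
      intro y hy
      rw [uIcc_of_le hh₂.le] at hy
      have hp : ((x : ℝ), y) ∈ U := hTU ⟨hxI, hy⟩
      have hdf : HasFDerivAt f (fderiv ℝ f (x, y)) (x, y) :=
        ((hf.contDiffAt (hU.mem_nhds hp)).differentiableAt one_ne_zero).hasFDerivAt
      have hline : HasDerivAt (fun t : ℝ => ((x, t) : ℝ × ℝ)) ((0:ℝ), (1:ℝ)) y :=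
        HasDerivAt.prodMk (hasDerivAt_const y x) (hasDerivAt_id y)
      exact hdf.comp_hasDerivAt y hline
    have hii : IntervalIntegrable (fun y => pd2 f (x, y)) volume 0 h₂ := by
      apply ContinuousOn.intervalIntegrable
      rw [uIcc_of_le hh₂.le]
      exact (hC.mono hTU).comp (Continuous.continuousOn (by continuity))
        (fun y hy => ⟨hxI, hy⟩)
    rw [← integral_Ioc_eq_integral_Ioo, ← intervalIntegral.integral_of_le hh₂.le,
      intervalIntegral.integral_eq_sub_of_hasDerivAt hderiv hii,
      (hf0 x hxI).1, (hf0 x hxI).2, sub_zero]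
  calc ∫ x in Ioo (0:ℝ) h₁, ∫ y in Ioo (0:ℝ) h₂, pd2 f (x, y)
      = ∫ x in Ioo (0:ℝ) h₁, (0:ℝ) := setIntegral_congr_fun measurableSet_Ioo inner
    _ = 0 := integral_zero _ _

theorem bilinear_form_of_bubble_against_affine
    (ε : ℝ) (hε : 0 < ε) (a : ℝ × ℝ) (h₁ h₂ : ℝ) (hh₁ : 0 < h₁) (hh₂ : 0 < h₂)
    (T : Set (ℝ × ℝ)) (hT : T = Ioo (0 : ℝ) h₁ ×ˢ Ioo (0 : ℝ) h₂)
    (b : ℝ × ℝ → ℝ) (U : Set (ℝ × ℝ)) (hU : IsOpen U) (hTU : closure T ⊆ U)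
    (hb : ContDiffOn ℝ 2 b U)
    (hb0 : ∀ x ∈ frontier T, b x = 0)
    (hpde : ∀ x ∈ T, -ε * lap b x + adv a b x = 1) :
    ∀ (c₀ : ℝ) (g : ℝ × ℝ) (φ : ℝ × ℝ → ℝ),
      (∀ x : ℝ × ℝ, φ x = c₀ + (g.1 * x.1 + g.2 * x.2)) →
      ∫ x in T, (ε * (pd1 b x * pd1 φ x + pd2 b x * pd2 φ x) + adv a b x * φ x) =
        -((a.1 * g.1 + a.2 * g.2) * ∫ x in T, b x) := by
  intro c₀ g φ hφ
  subst hT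
  -- closure and frontier description
  have hclT : closure (Ioo (0:ℝ) h₁ ×ˢ Ioo (0:ℝ) h₂) = Icc (0:ℝ) h₁ ×ˢ Icc (0:ℝ) h₂ := by
    rw [closure_prod_eq, closure_Ioo hh₁.ne, closure_Ioo hh₂.ne]
  have hTU' : Icc (0:ℝ) h₁ ×ˢ Icc (0:ℝ) h₂ ⊆ U := hclT ▸ hTU
  have hfr : frontier (Ioo (0:ℝ) h₁ ×ˢ Ioo (0:ℝ) h₂)
      = (Icc (0:ℝ) h₁ ×ˢ Icc (0:ℝ) h₂) \ (Ioo (0:ℝ) h₁ ×ˢ Ioo (0:ℝ) h₂) := by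
    rw [frontier, hclT, (isOpen_Ioo.prod isOpen_Ioo).interior_eq]
  -- boundary values of b
  have hb0' : ∀ p ∈ Icc (0:ℝ) h₁ ×ˢ Icc (0:ℝ) h₂,
      p.1 = 0 ∨ p.1 = h₁ ∨ p.2 = 0 ∨ p.2 = h₂ → b p = 0 := by
    intro p hp hcase
    apply hb0
    rw [hfr]
    refine ⟨hp, fun hmem => ?_⟩
    rcases hcase with h | h | h | h
    · exact absurd (h ▸ hmem.1.1) (lt_irrefl 0)
    · exact absurd (h ▸ hmem.1.2) (lt_irrefl h₁)
    · exact absurd (h ▸ hmem.2.1) (lt_irrefl 0)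
    · exact absurd (h ▸ hmem.2.2) (lt_irrefl h₂)
  -- the affine function φ
  set L : (ℝ × ℝ) →L[ℝ] ℝ :=
    g.1 • (ContinuousLinearMap.fst ℝ ℝ ℝ) + g.2 • (ContinuousLinearMap.snd ℝ ℝ ℝ) with hL
  have hφeq : φ = fun p => c₀ + L p := by
    funext p
    simp [hφ p, hL]
  have hφd : ∀ x : ℝ × ℝ, HasFDerivAt φ L x := by
    intro x
    rw [hφeq]
    exact L.hasFDerivAt.const_add c₀
  have hpd1φ : ∀ x, pd1 φ x = g.1 := by
    intro x
    rw [pd1, (hφd x).fderiv]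
    simp [hL]
  have hpd2φ : ∀ x, pd2 φ x = g.2 := by
    intro x
    rw [pd2, (hφd x).fderiv]
    simp [hL]
  have hφC : ContDiff ℝ 1 φ := by
    rw [hφeq]; exact contDiff_const.add L.contDiff
  -- F = b * φ
  set F : ℝ × ℝ → ℝ := fun x => b x * φ x with hF
  have hb1 : ContDiffOn ℝ 1 b U := hb.of_le one_le_two
  have hF1 : ContDiffOn ℝ 1 F U := hb1.mul (hφC.contDiffOn)
  -- product rule on U
  have hprod : ∀ p ∈ U, pd1 F p = pd1 b p * φ p + b p * g.1 ∧
      pd2 F p = pd2 b p * φ p + b p * g.2 := by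
    intro p hp
    have hdb : HasFDerivAt b (fderiv ℝ b p) p :=
      ((hb1.contDiffAt (hU.mem_nhds hp)).differentiableAt one_ne_zero).hasFDerivAt
    have hdF : HasFDerivAt F (b p • L + φ p • fderiv ℝ b p) p := hdb.mul (hφd p)
    constructor
    · rw [pd1, hdF.fderiv]
      simp [pd1, hL]; ring
    · rw [pd2, hdF.fderiv]
      simp [pd2, hL]; ring
  -- zero integrals
  have hI1 : ∫ x in Ioo (0:ℝ) h₁ ×ˢ Ioo (0:ℝ) h₂, pd1 b x = 0 := by
    apply key1 h₁ h₂ hh₁ hh₂ b U hU hTU' hb1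
    intro y hy
    exact ⟨hb0' (0, y) ⟨left_mem_Icc.2 hh₁.le, hy⟩ (Or.inl rfl),
      hb0' (h₁, y) ⟨right_mem_Icc.2 hh₁.le, hy⟩ (Or.inr (Or.inl rfl))⟩
  have hI2 : ∫ x in Ioo (0:ℝ) h₁ ×ˢ Ioo (0:ℝ) h₂, pd2 b x = 0 := by
    apply key2 h₁ h₂ hh₁ hh₂ b U hU hTU' hb1
    intro x hx
    exact ⟨hb0' (x, 0) ⟨hx, left_mem_Icc.2 hh₂.le⟩ (Or.inr (Or.inr (Or.inl rfl))),
      hb0' (x, h₂) ⟨hx, right_mem_Icc.2 hh₂.le⟩ (Or.inr (Or.inr (Or.inr rfl)))⟩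
  have hI3 : ∫ x in Ioo (0:ℝ) h₁ ×ˢ Ioo (0:ℝ) h₂, pd1 F x = 0 := by
    apply key1 h₁ h₂ hh₁ hh₂ F U hU hTU' hF1
    intro y hy
    exact ⟨by simp [hF, hb0' (0, y) ⟨left_mem_Icc.2 hh₁.le, hy⟩ (Or.inl rfl)],
      by simp [hF, hb0' (h₁, y) ⟨right_mem_Icc.2 hh₁.le, hy⟩ (Or.inr (Or.inl rfl))]⟩
  have hI4 : ∫ x in Ioo (0:ℝ) h₁ ×ˢ Ioo (0:ℝ) h₂, pd2 F x = 0 := by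
    apply key2 h₁ h₂ hh₁ hh₂ F U hU hTU' hF1
    intro x hx
    exact ⟨by simp [hF, hb0' (x, 0) ⟨hx, left_mem_Icc.2 hh₂.le⟩ (Or.inr (Or.inr (Or.inl rfl)))],
      by simp [hF, hb0' (x, h₂) ⟨hx, right_mem_Icc.2 hh₂.le⟩ (Or.inr (Or.inr (Or.inr rfl)))]⟩
  -- integrability helper
  have mk : ∀ u : ℝ × ℝ → ℝ, ContinuousOn u U →
      IntegrableOn u (Ioo (0:ℝ) h₁ ×ˢ Ioo (0:ℝ) h₂) := fun u hu =>
    ((hu.mono hTU').integrableOn_compact (isCompact_Icc.prod isCompact_Icc)).mono_set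
      (prod_mono Ioo_subset_Icc_self Ioo_subset_Icc_self)
  have hIb := mk b hb1.continuousOn
  have hJ1 := mk _ (contOn_pd1 b U hU hb1)
  have hJ2 := mk _ (contOn_pd2 b U hU hb1)
  have hJ3 := mk _ (contOn_pd1 F U hU hF1)
  have hJ4 := mk _ (contOn_pd2 F U hU hF1)
  have hmeas : MeasurableSet (Ioo (0:ℝ) h₁ ×ˢ Ioo (0:ℝ) h₂) :=
    measurableSet_Ioo.prod measurableSet_Ioo
  have hptw : EqOn (fun x => ε * (pd1 b x * pd1 φ x + pd2 b x * pd2 φ x) + adv a b x * φ x)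
      (fun x => (ε * g.1) * pd1 b x + ((ε * g.2) * pd2 b x + (a.1 * pd1 F x +
        (a.2 * pd2 F x + (-(a.1 * g.1 + a.2 * g.2)) * b x))))
      (Ioo (0:ℝ) h₁ ×ˢ Ioo (0:ℝ) h₂) := by
    intro x hx
    have hxU : x ∈ U := hTU' ((prod_mono Ioo_subset_Icc_self Ioo_subset_Icc_self) hx)
    obtain ⟨hp1, hp2⟩ := hprod x hxU
    simp only [hp1, hp2, hpd1φ, hpd2φ, adv]
    ring
  rw [setIntegral_congr_fun hmeas hptw]
  have e1 := hJ1.const_mul (ε * g.1)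
  have e2 := hJ2.const_mul (ε * g.2)
  have e3 := hJ3.const_mul a.1
  have e4 := hJ4.const_mul a.2
  have e5 := hIb.const_mul (-(a.1 * g.1 + a.2 * g.2))
  have e45 : Integrable (fun x => a.2 * pd2 F x + -(a.1 * g.1 + a.2 * g.2) * b x)
      (volume.restrict (Ioo (0:ℝ) h₁ ×ˢ Ioo (0:ℝ) h₂)) := e4.add e5
  have e345 : Integrable (fun x => a.1 * pd1 F x +
      (a.2 * pd2 F x + -(a.1 * g.1 + a.2 * g.2) * b x))
      (volume.restrict (Ioo (0:ℝ) h₁ ×ˢ Ioo (0:ℝ) h₂)) := e3.add e45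
  have e2345 : Integrable (fun x => ε * g.2 * pd2 b x + (a.1 * pd1 F x +
      (a.2 * pd2 F x + -(a.1 * g.1 + a.2 * g.2) * b x)))
      (volume.restrict (Ioo (0:ℝ) h₁ ×ˢ Ioo (0:ℝ) h₂)) := e2.add e345
  rw [integral_add e1 e2345, integral_add e2 e345, integral_add e3 e45, integral_add e4 e5,
    integral_const_mul, integral_const_mul, integral_const_mul, integral_const_mul,
    integral_const_mul, hI1, hI2, hI3, hI4]
  ring
end
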